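/- arXiv:1410.2596 — 2 statements merged into one kernel-verified Lean document; each statement's English description precedes it below -/
import Mathlib

section
/- For any m×r matrix A and n×r matrix B, F(A,B) ≥ H(ABᵀ), where F(A,B) := (1/2)‖P_Ω(X − ABᵀ)‖_F² + (λ/2)(‖A‖_F² + ‖B‖_F²) and H(M) := (1/2)‖P_Ω(X − M)‖_F² + λ‖M‖_*. Moreover, equality F(A,B) = H(ABᵀ) holds when A = UD^{1/2} and B = VD^{1/2}, where UDVᵀ is a singular value decomposition of ABᵀ. Consequently, if the softImpute-ALS iterates (A_k,B_k) are re-parametrized after each iteration to this SVD form (which leaves A_kB_kᵀ and the training-error term unchanged and does not increase F), then the sequence H(A_kB_kᵀ) is monotonically decreasing: H(A_kB_kᵀ) ≥ H(A_{k+1}B_{k+1}ᵀ) for all k, with H(A_kB_kᵀ) = F(A_k,B_k). -/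
noncomputable section

open Matrix Filter

/-- Squared Frobenius norm of a real matrix. -/
def frobSq {m n : ℕ} (M : Matrix (Fin m) (Fin n) ℝ) : ℝ := ∑ i, ∑ j, (M i j) ^ 2

/-- `P_Ω`: keep the entries in `Ω`, zero out the rest. -/
def proj {m n : ℕ} (Ω : Finset (Fin m × Fin n)) (Y : Matrix (Fin m) (Fin n) ℝ) :
    Matrix (Fin m) (Fin n) ℝ := Matrix.of fun i j => if (i, j) ∈ Ω then Y i j else 0

/-- `P_Ω^⊥`: zero out the entries in `Ω`, keep the rest. -/
def projPerp {m n : ℕ} (Ω : Finset (Fin m × Fin n)) (Y : Matrix (Fin m) (Fin n) ℝ) :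
    Matrix (Fin m) (Fin n) ℝ := Matrix.of fun i j => if (i, j) ∈ Ω then 0 else Y i j

/-- `F(A,B) = (1/2)‖P_Ω(X − ABᵀ)‖_F² + (λ/2)(‖A‖_F² + ‖B‖_F²)`. -/
def Fobj {m n r : ℕ} (Ω : Finset (Fin m × Fin n)) (X : Matrix (Fin m) (Fin n) ℝ) (lam : ℝ)
    (A : Matrix (Fin m) (Fin r) ℝ) (B : Matrix (Fin n) (Fin r) ℝ) : ℝ :=
  (1 / 2) * frobSq (proj Ω (X - A * Bᵀ)) + (lam / 2) * (frobSq A + frobSq B)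

/-- `Q_A(Z₁|A,B)`. -/
def QA {m n r : ℕ} (Ω : Finset (Fin m × Fin n)) (X : Matrix (Fin m) (Fin n) ℝ) (lam : ℝ)
    (Z₁ : Matrix (Fin m) (Fin r) ℝ) (A : Matrix (Fin m) (Fin r) ℝ)
    (B : Matrix (Fin n) (Fin r) ℝ) : ℝ :=
  (1 / 2) * frobSq (proj Ω (X - Z₁ * Bᵀ) + projPerp Ω (A * Bᵀ - Z₁ * Bᵀ)) +
    (lam / 2) * frobSq Z₁ + (lam / 2) * frobSq B

/-- `Q_B(Z₂|A,B)`. -/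
def QB {m n r : ℕ} (Ω : Finset (Fin m × Fin n)) (X : Matrix (Fin m) (Fin n) ℝ) (lam : ℝ)
    (Z₂ : Matrix (Fin n) (Fin r) ℝ) (A : Matrix (Fin m) (Fin r) ℝ)
    (B : Matrix (Fin n) (Fin r) ℝ) : ℝ :=
  (1 / 2) * frobSq (proj Ω (X - A * Z₂ᵀ) + projPerp Ω (A * Bᵀ - A * Z₂ᵀ)) +
    (lam / 2) * frobSq A + (lam / 2) * frobSq Z₂

/-- `(A_k, B_k)` are softImpute-ALS iterates: `A_{k+1} ∈ argmin Q_A(·|A_k,B_k)` and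
`B_{k+1} ∈ argmin Q_B(·|A_{k+1},B_k)`. -/
def SoftImputeALS {m n r : ℕ} (Ω : Finset (Fin m × Fin n)) (X : Matrix (Fin m) (Fin n) ℝ)
    (lam : ℝ) (A : ℕ → Matrix (Fin m) (Fin r) ℝ) (B : ℕ → Matrix (Fin n) (Fin r) ℝ) : Prop :=
  ∀ k : ℕ,
    (∀ Z₁ : Matrix (Fin m) (Fin r) ℝ,
      QA Ω X lam (A (k + 1)) (A k) (B k) ≤ QA Ω X lam Z₁ (A k) (B k)) ∧
    (∀ Z₂ : Matrix (Fin n) (Fin r) ℝ,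
      QB Ω X lam (B (k + 1)) (A (k + 1)) (B k) ≤ QB Ω X lam Z₂ (A (k + 1)) (B k))

/-- Nuclear norm: sum of the singular values, i.e. of the square roots of the
eigenvalues of `Zᴴ * Z`. -/
def nuclearNorm {m n : ℕ} (Z : Matrix (Fin m) (Fin n) ℝ) : ℝ :=
  ∑ i, Real.sqrt ((Matrix.isHermitian_conjTranspose_mul_self Z).eigenvalues i)

/-- `H(M) = (1/2)‖P_Ω(X − M)‖_F² + λ‖M‖_*`. -/
def Hobj {m n : ℕ} (Ω : Finset (Fin m × Fin n)) (X : Matrix (Fin m) (Fin n) ℝ) (lam : ℝ)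
    (M : Matrix (Fin m) (Fin n) ℝ) : ℝ :=
  (1 / 2) * frobSq (proj Ω (X - M)) + lam * nuclearNorm M

/-- `(A, B)` is in SVD form: `A = U D^{1/2}` and `B = V D^{1/2}` where `U D Vᵀ` is an SVD
of `A Bᵀ`. -/
def SVDForm {m n r : ℕ} (A : Matrix (Fin m) (Fin r) ℝ) (B : Matrix (Fin n) (Fin r) ℝ) : Prop :=
  ∃ (U : Matrix (Fin m) (Fin r) ℝ) (d : Fin r → ℝ) (V : Matrix (Fin n) (Fin r) ℝ),
    Uᵀ * U = 1 ∧ Vᵀ * V = 1 ∧ (∀ i, 0 ≤ d i) ∧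
    A = U * Matrix.diagonal (fun i => Real.sqrt (d i)) ∧
    B = V * Matrix.diagonal (fun i => Real.sqrt (d i))

/-!
`F(A, B) ≥ H(ABᵀ)` reduces to `‖ABᵀ‖_* ≤ (‖A‖_F² + ‖B‖_F²) / 2`. Diagonalise `MᵀM = V diag(σ²) Vᵀ`
for `M = ABᵀ` and put `U = M V diag(σ⁻¹)`, a partial isometry; then
`‖M‖_* = tr (Uᵀ M V) = ⟨UᵀA, VᵀB⟩_F`, which AM-GM bounds by
`(‖UᵀA‖_F² + ‖VᵀB‖_F²) / 2 ≤ (‖A‖_F² + ‖B‖_F²) / 2`.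
For `A = U D^{1/2}`, `B = V D^{1/2}` both Frobenius norms are `tr D`, and `V D Vᵀ` is the positive
square root of `MᵀM`, so `‖M‖_* = tr D` as well.
Since `Q_A` and `Q_B` majorize `F` and agree with it at the current iterate, an ALS sweep does not
increase `F`, and `H(A_{k+1}B_{k+1}ᵀ) ≤ F(A', B') ≤ F(A_k, B_k) = H(A_k B_kᵀ)`.
-/

section Frobenius

variable {m n r : ℕ}

lemma frobSq_nonneg (M : Matrix (Fin m) (Fin n) ℝ) : 0 ≤ frobSq M := by
  unfold frobSq; positivity

lemma frobSq_eq_trace (M : Matrix (Fin m) (Fin n) ℝ) : frobSq M = trace (Mᵀ * M) := by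
  simp only [frobSq, trace, diag, mul_apply, transpose_apply, ← sq]
  exact Finset.sum_comm

lemma trace_mul_transpose_le (P Q : Matrix (Fin m) (Fin n) ℝ) :
    trace (P * Qᵀ) ≤ (frobSq P + frobSq Q) / 2 := by
  simp only [frobSq, trace, diag, mul_apply, transpose_apply, ← Finset.sum_add_distrib,
    Finset.sum_div]
  gcongr with i _ j _
  nlinarith [sq_nonneg (P i j - Q i j)]

lemma frobSq_mul_of_transpose_mul_self_eq_one {W : Matrix (Fin r) (Fin m) ℝ}
    (hW : Wᵀ * W = 1) (A : Matrix (Fin m) (Fin n) ℝ) : frobSq (W * A) = frobSq A := by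
  rw [frobSq_eq_trace, frobSq_eq_trace, transpose_mul, Matrix.mul_assoc, ← Matrix.mul_assoc Wᵀ,
    hW, Matrix.one_mul]

lemma frobSq_mul_diagonal {U : Matrix (Fin m) (Fin r) ℝ} (hU : Uᵀ * U = 1) (s : Fin r → ℝ) :
    frobSq (U * diagonal s) = ∑ i, s i ^ 2 := by
  rw [frobSq_mul_of_transpose_mul_self_eq_one hU, frobSq]
  simp [diagonal_apply, sq]

lemma frobSq_mul_le_of_mul_transpose_mul_self {W : Matrix (Fin r) (Fin m) ℝ}
    (hW : W * Wᵀ * W = W) (A : Matrix (Fin m) (Fin n) ℝ) : frobSq (W * A) ≤ frobSq A := by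
  set P := Wᵀ * W
  have hPP : (1 - P)ᵀ * (1 - P) = 1 - P := by
    have hPsq : P * P = P := by rw [Matrix.mul_assoc, ← Matrix.mul_assoc W, hW]
    rw [transpose_sub, transpose_one, transpose_mul, transpose_transpose,
      show (1 - P) * (1 - P) = 1 - P - P + P * P by noncomm_ring, hPsq]
    abel
  have hsplit : frobSq A = frobSq (W * A) + frobSq ((1 - P) * A) := by
    have hWA : frobSq (W * A) = trace (Aᵀ * P * A) := by
      simp only [frobSq_eq_trace, transpose_mul, P, Matrix.mul_assoc]
    have hPA : frobSq ((1 - P) * A) = trace (Aᵀ * ((1 - P)ᵀ * (1 - P)) * A) := by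
      simp only [frobSq_eq_trace, transpose_mul, Matrix.mul_assoc]
    rw [hWA, hPA, hPP, Matrix.mul_sub, Matrix.sub_mul, Matrix.mul_one, trace_sub, frobSq_eq_trace]
    ring
  linarith [frobSq_nonneg ((1 - P) * A)]

end Frobenius

section Spectral

variable {n : ℕ} {S : Matrix (Fin n) (Fin n) ℝ}

lemma Matrix.IsHermitian.eigenvectorUnitary_mul_transpose (hS : S.IsHermitian) :
    (hS.eigenvectorUnitary : Matrix (Fin n) (Fin n) ℝ) *
      (hS.eigenvectorUnitary : Matrix (Fin n) (Fin n) ℝ)ᵀ = 1 := by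
  simpa [star_eq_conjTranspose] using Unitary.coe_mul_star_self hS.eigenvectorUnitary

lemma Matrix.IsHermitian.transpose_eigenvectorUnitary_mul_mul (hS : S.IsHermitian) :
    (hS.eigenvectorUnitary : Matrix (Fin n) (Fin n) ℝ)ᵀ * S * hS.eigenvectorUnitary
      = diagonal hS.eigenvalues := by
  simpa [Unitary.conjStarAlgAut_star_apply, star_eq_conjTranspose] using
    hS.conjStarAlgAut_star_eigenvectorUnitary

lemma Matrix.IsHermitian.trace_cfc (hS : S.IsHermitian) (f : ℝ → ℝ) :
    trace (cfc f S) = ∑ i, f (hS.eigenvalues i) := by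
  rw [hS.cfc_eq, IsHermitian.cfc, Unitary.conjStarAlgAut_apply, trace_mul_cycle,
    Unitary.coe_star_mul_self, Matrix.one_mul, trace_diagonal]
  rfl

end Spectral

section NuclearNorm

variable {m n r : ℕ}

lemma exists_partialIsometry_transpose_mul_mul_eq_diagonal
    (M : Matrix (Fin m) (Fin n) ℝ) (V : Matrix (Fin n) (Fin n) ℝ) (σ : Fin n → ℝ)
    (h : Vᵀ * (Mᵀ * M) * V = diagonal (σ * σ)) :
    ∃ U : Matrix (Fin m) (Fin n) ℝ, Uᵀ * U * Uᵀ = Uᵀ ∧ Uᵀ * M * V = diagonal σ := by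
  have hUMV : diagonal σ⁻¹ * Vᵀ * Mᵀ * M * V = diagonal σ := by
    simp only [Matrix.mul_assoc] at h ⊢
    rw [h, diagonal_mul_diagonal]
    simp only [Pi.mul_apply, Pi.inv_apply, ← mul_assoc, inv_mul_mul_self]
  -- `σ⁻¹` is entrywise with `0⁻¹ = 0`, so `U` kills the directions where `σ` vanishes.
  refine ⟨M * V * diagonal σ⁻¹, ?_, ?_⟩
  · calc (M * V * diagonal σ⁻¹)ᵀ * (M * V * diagonal σ⁻¹) * (M * V * diagonal σ⁻¹)ᵀ
        = (diagonal σ⁻¹ * Vᵀ * Mᵀ * M * V) * diagonal σ⁻¹ * diagonal σ⁻¹ * (Vᵀ * Mᵀ) := by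
          simp only [transpose_mul, diagonal_transpose, Matrix.mul_assoc]
      _ = diagonal (σ * σ⁻¹ * σ⁻¹) * (Vᵀ * Mᵀ) := by
          rw [hUMV, diagonal_mul_diagonal, diagonal_mul_diagonal]
          rfl
      _ = (M * V * diagonal σ⁻¹)ᵀ := by
          rw [show σ * σ⁻¹ * σ⁻¹ = σ⁻¹ from funext fun i => by
            simpa only [Pi.mul_apply, Pi.inv_apply, inv_inv] using inv_mul_mul_self (σ i)⁻¹]
          simp only [transpose_mul, diagonal_transpose, Matrix.mul_assoc]
  · simpa only [transpose_mul, diagonal_transpose, Matrix.mul_assoc] using hUMV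

lemma nuclearNorm_mul_transpose_le (A : Matrix (Fin m) (Fin r) ℝ)
    (B : Matrix (Fin n) (Fin r) ℝ) : nuclearNorm (A * Bᵀ) ≤ (frobSq A + frobSq B) / 2 := by
  set M := A * Bᵀ
  have hM : (Mᵀ * M).PosSemidef := by
    simpa using posSemidef_conjTranspose_mul_self M
  set V : Matrix (Fin n) (Fin n) ℝ := ↑hM.1.eigenvectorUnitary
  set σ := fun i => √(hM.1.eigenvalues i)
  have hdiag : Vᵀ * (Mᵀ * M) * V = diagonal (σ * σ) := by
    rw [hM.1.transpose_eigenvectorUnitary_mul_mul]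
    exact congrArg diagonal <| funext fun i => (Real.mul_self_sqrt (hM.eigenvalues_nonneg i)).symm
  obtain ⟨U, hU, hUMV⟩ := exists_partialIsometry_transpose_mul_mul_eq_diagonal M V σ hdiag
  have hV : (Vᵀ)ᵀ * Vᵀ = 1 := by
    rw [transpose_transpose]; exact hM.1.eigenvectorUnitary_mul_transpose
  calc nuclearNorm M = trace (diagonal σ) := (trace_diagonal σ).symm
    _ = trace ((Uᵀ * A) * (Vᵀ * B)ᵀ) := by
      rw [← hUMV]; simp only [M, transpose_mul, transpose_transpose, Matrix.mul_assoc]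
    _ ≤ (frobSq (Uᵀ * A) + frobSq (Vᵀ * B)) / 2 := trace_mul_transpose_le _ _
    _ ≤ (frobSq A + frobSq B) / 2 := by
      rw [frobSq_mul_of_transpose_mul_self_eq_one hV]
      gcongr
      exact frobSq_mul_le_of_mul_transpose_mul_self (by simpa only [transpose_transpose]) A

open scoped MatrixOrder in
lemma nuclearNorm_eq_trace_of_mul_self_eq (M : Matrix (Fin m) (Fin n) ℝ)
    {S : Matrix (Fin n) (Fin n) ℝ} (hS : S.PosSemidef) (h : S * S = Mᵀ * M) :
    nuclearNorm M = trace S := by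
  have hM : (Mᵀ * M).PosSemidef := by
    simpa using posSemidef_conjTranspose_mul_self M
  have hsqrt : CFC.sqrt (Mᵀ * M) = S := (CFC.sqrt_eq_iff _ _ hM.nonneg hS.nonneg).mpr h
  rw [← hsqrt, CFC.sqrt_eq_cfc, cfc_nnreal_eq_real _ (Mᵀ * M), hM.1.trace_cfc]
  refine Finset.sum_congr rfl fun i _ => ?_
  simp [max_eq_left (hM.eigenvalues_nonneg i)]

lemma nuclearNorm_mul_diagonal_mul_transpose {U : Matrix (Fin m) (Fin r) ℝ}
    {V : Matrix (Fin n) (Fin r) ℝ} (hU : Uᵀ * U = 1) (hV : Vᵀ * V = 1) {d : Fin r → ℝ}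
    (hd : 0 ≤ d) : nuclearNorm (U * diagonal d * Vᵀ) = ∑ i, d i := by
  have hS : (V * diagonal d * Vᵀ).PosSemidef := by
    simpa using (posSemidef_diagonal_iff.mpr hd).mul_mul_conjTranspose_same V
  have hsq : (V * diagonal d * Vᵀ) * (V * diagonal d * Vᵀ) =
      (U * diagonal d * Vᵀ)ᵀ * (U * diagonal d * Vᵀ) := by
    simp only [transpose_mul, diagonal_transpose, transpose_transpose, Matrix.mul_assoc]
    rw [← Matrix.mul_assoc Vᵀ V, ← Matrix.mul_assoc Uᵀ U, hU, hV]
  rw [nuclearNorm_eq_trace_of_mul_self_eq _ hS hsq, trace_mul_cycle, hV, Matrix.one_mul,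
    trace_diagonal]

end NuclearNorm

section Objectives

variable {m n r : ℕ} (Ω : Finset (Fin m × Fin n)) (X : Matrix (Fin m) (Fin n) ℝ) (lam : ℝ)

theorem Hobj_mul_transpose_le_Fobj (hlam : 0 ≤ lam) (A : Matrix (Fin m) (Fin r) ℝ)
    (B : Matrix (Fin n) (Fin r) ℝ) : Hobj Ω X lam (A * Bᵀ) ≤ Fobj Ω X lam A B := by
  have := mul_le_mul_of_nonneg_left (nuclearNorm_mul_transpose_le A B) hlam
  rw [Hobj, Fobj]
  linarith

theorem Fobj_eq_Hobj_of_SVDForm {A : Matrix (Fin m) (Fin r) ℝ} {B : Matrix (Fin n) (Fin r) ℝ}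
    (hAB : SVDForm A B) : Fobj Ω X lam A B = Hobj Ω X lam (A * Bᵀ) := by
  obtain ⟨U, d, V, hU, hV, hd, rfl, rfl⟩ := hAB
  have hsqrt : (fun i => √(d i) ^ 2) = d := funext fun i => Real.sq_sqrt (hd i)
  have hprod : U * diagonal (fun i => √(d i)) * (V * diagonal (fun i => √(d i)))ᵀ
      = U * diagonal d * Vᵀ := by
    rw [transpose_mul, diagonal_transpose, Matrix.mul_assoc U, ← Matrix.mul_assoc (diagonal _),
      diagonal_mul_diagonal, ← Matrix.mul_assoc]
    simp only [← sq, hsqrt]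
  rw [Fobj, Hobj, frobSq_mul_diagonal hU, frobSq_mul_diagonal hV, hsqrt, hprod,
    nuclearNorm_mul_diagonal_mul_transpose hU hV hd]
  ring

lemma frobSq_proj_le_frobSq_proj_add_projPerp (Y W : Matrix (Fin m) (Fin n) ℝ) :
    frobSq (proj Ω Y) ≤ frobSq (proj Ω Y + projPerp Ω W) := by
  refine Finset.sum_le_sum fun i _ => Finset.sum_le_sum fun j _ => ?_
  by_cases h : (i, j) ∈ Ω <;> simp [proj, projPerp, h, sq_nonneg]

lemma Fobj_le_QA (Z A : Matrix (Fin m) (Fin r) ℝ) (B : Matrix (Fin n) (Fin r) ℝ) :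
    Fobj Ω X lam Z B ≤ QA Ω X lam Z A B := by
  have := frobSq_proj_le_frobSq_proj_add_projPerp Ω (X - Z * Bᵀ) (A * Bᵀ - Z * Bᵀ)
  rw [Fobj, QA]
  linarith

lemma Fobj_le_QB (Z B : Matrix (Fin n) (Fin r) ℝ) (A : Matrix (Fin m) (Fin r) ℝ) :
    Fobj Ω X lam A Z ≤ QB Ω X lam Z A B := by
  have := frobSq_proj_le_frobSq_proj_add_projPerp Ω (X - A * Zᵀ) (A * Bᵀ - A * Zᵀ)
  rw [Fobj, QB]
  linarith

@[simp]
lemma projPerp_zero : projPerp Ω (0 : Matrix (Fin m) (Fin n) ℝ) = 0 := by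
  ext i j
  simp [projPerp]

lemma QA_self (A : Matrix (Fin m) (Fin r) ℝ) (B : Matrix (Fin n) (Fin r) ℝ) :
    QA Ω X lam A A B = Fobj Ω X lam A B := by
  rw [QA, Fobj, sub_self, projPerp_zero, add_zero]
  ring

lemma QB_self (A : Matrix (Fin m) (Fin r) ℝ) (B : Matrix (Fin n) (Fin r) ℝ) :
    QB Ω X lam B A B = Fobj Ω X lam A B := by
  rw [QB, Fobj, sub_self, projPerp_zero, add_zero]
  ring

theorem Fobj_le_of_forall_QA_le_of_forall_QB_le {A A' : Matrix (Fin m) (Fin r) ℝ}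
    {B B' : Matrix (Fin n) (Fin r) ℝ} (hA' : ∀ Z, QA Ω X lam A' A B ≤ QA Ω X lam Z A B)
    (hB' : ∀ Z, QB Ω X lam B' A' B ≤ QB Ω X lam Z A' B) :
    Fobj Ω X lam A' B' ≤ Fobj Ω X lam A B :=
  calc Fobj Ω X lam A' B' ≤ QB Ω X lam B' A' B := Fobj_le_QB Ω X lam B' B A'
    _ ≤ QB Ω X lam B A' B := hB' B
    _ = Fobj Ω X lam A' B := QB_self Ω X lam A' B
    _ ≤ QA Ω X lam A' A B := Fobj_le_QA Ω X lam A' A B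
    _ ≤ QA Ω X lam A A B := hA' A
    _ = Fobj Ω X lam A B := QA_self Ω X lam A B

end Objectives

theorem F_ge_H_and_H_monotone {m n r : ℕ} (Ω : Finset (Fin m × Fin n))
    (X : Matrix (Fin m) (Fin n) ℝ) (lam : ℝ) (hlam : 0 ≤ lam) :
    -- F(A,B) ≥ H(ABᵀ) for all A, B
    (∀ (A : Matrix (Fin m) (Fin r) ℝ) (B : Matrix (Fin n) (Fin r) ℝ),
        Fobj Ω X lam A B ≥ Hobj Ω X lam (A * Bᵀ)) ∧
    -- with equality when (A, B) is in SVD form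
    (∀ (A : Matrix (Fin m) (Fin r) ℝ) (B : Matrix (Fin n) (Fin r) ℝ),
        SVDForm A B → Fobj Ω X lam A B = Hobj Ω X lam (A * Bᵀ)) ∧
    -- consequently, softImpute-ALS iterates re-parametrized to SVD form after each
    -- iteration yield a decreasing sequence H(A_k B_kᵀ), with H(A_k B_kᵀ) = F(A_k, B_k)
    (∀ (A : ℕ → Matrix (Fin m) (Fin r) ℝ) (B : ℕ → Matrix (Fin n) (Fin r) ℝ),
        (∀ k : ℕ, SVDForm (A k) (B k)) →
        (∀ k : ℕ, ∃ (A' : Matrix (Fin m) (Fin r) ℝ) (B' : Matrix (Fin n) (Fin r) ℝ),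
          (∀ Z₁ : Matrix (Fin m) (Fin r) ℝ,
            QA Ω X lam A' (A k) (B k) ≤ QA Ω X lam Z₁ (A k) (B k)) ∧
          (∀ Z₂ : Matrix (Fin n) (Fin r) ℝ,
            QB Ω X lam B' A' (B k) ≤ QB Ω X lam Z₂ A' (B k)) ∧
          A (k + 1) * (B (k + 1))ᵀ = A' * B'ᵀ) →
        (∀ k : ℕ, Hobj Ω X lam (A k * (B k)ᵀ) ≥ Hobj Ω X lam (A (k + 1) * (B (k + 1))ᵀ)) ∧
        (∀ k : ℕ, Hobj Ω X lam (A k * (B k)ᵀ) = Fobj Ω X lam (A k) (B k))) := by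
  have hFH : ∀ (A : Matrix (Fin m) (Fin r) ℝ) (B : Matrix (Fin n) (Fin r) ℝ),
      SVDForm A B → Fobj Ω X lam A B = Hobj Ω X lam (A * Bᵀ) :=
    fun _ _ => Fobj_eq_Hobj_of_SVDForm Ω X lam
  refine ⟨fun A B => Hobj_mul_transpose_le_Fobj Ω X lam hlam A B, hFH, fun A B hSVD hstep => ?_⟩
  refine ⟨fun k => ?_, fun k => (hFH _ _ (hSVD k)).symm⟩
  obtain ⟨A', B', hA', hB', hprod⟩ := hstep k
  calc Hobj Ω X lam (A (k + 1) * (B (k + 1))ᵀ) = Hobj Ω X lam (A' * B'ᵀ) := by rw [hprod]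
    _ ≤ Fobj Ω X lam A' B' := Hobj_mul_transpose_le_Fobj Ω X lam hlam A' B'
    _ ≤ Fobj Ω X lam (A k) (B k) := Fobj_le_of_forall_QA_le_of_forall_QB_le Ω X lam hA' hB'
    _ = Hobj Ω X lam (A k * (B k)ᵀ) := hFH _ _ (hSVD k)

end
end

section
/- Let λ > 0 and let (A*,B*) (with A* m×r, B* n×r) be a limit point of the softImpute-ALS iterates, and suppose the convex problem min_M H(M) := (1/2)‖P_Ω(X − M)‖_F² + λ‖M‖_* has a minimizer of rank at most r. If Z* := A*B*ᵀ is a minimizer of the fully observed nuclear-norm problem min_Z (1/2)‖(P_Ω(X) + P_Ω^⊥(A*B*ᵀ)) − Z‖_F² + λ‖Z‖_* (over all m×n matrices Z), then Z* is a minimizer of the convex problem min_M H(M). -/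
noncomputable section

open Matrix Filter

/-!
`Z* = A*B*ᵀ` minimises `G(Z) = H(Z) + ½‖P_Ω^⊥(Z* - Z)‖_F²`, which agrees with `H` at `Z*` and
exceeds it only by a term quadratic in `Z - Z*`. Restricting to the segment `Z_t = (1-t)Z* + tM`,
convexity of `H` gives `H(Z*) ≤ (1-t)H(Z*) + tH(M) + O(t²)`, hence `H(Z*) ≤ H(M) + O(t)`, and
`t → 0⁺` gives `H(Z*) ≤ H(M)`.

Convexity of the nuclear norm comes from its variational form
`‖Z‖_* = min {(‖A‖_F² + ‖B‖_F²)/2 | Z = ABᵀ}`. The minimum is attained by a balanced factorization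
built from an orthogonal diagonalization `VᵀZᵀZV = diag μ`, and the lower bound follows by pairing
`ABᵀ` with a partial isometry `U` and the orthogonal `V`, for which `tr(UᵀZV) = ‖Z‖_*`.
Placing two factorizations side by side then gives subadditivity.
-/

open Set in
theorem ConvexOn.le_of_forall_le_add_sq {E : Type*} [AddCommGroup E] [Module ℝ E] {s : Set E}
    {f : E → ℝ} (hf : ConvexOn ℝ s f) {x y : E} (hx : x ∈ s) (hy : y ∈ s) {K : ℝ}
    (h : ∀ t ∈ Ioc (0 : ℝ) 1, f x ≤ f ((1 - t) • x + t • y) + t ^ 2 * K) : f x ≤ f y := by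
  have hlin : ∀ t ∈ Ioc (0 : ℝ) 1, f x ≤ f y + t * K := by
    rintro t ⟨ht0, ht1⟩
    have hconv := hf.2 hx hy (sub_nonneg.2 ht1) ht0.le (sub_add_cancel 1 t)
    have hxt := h t ⟨ht0, ht1⟩
    rw [smul_eq_mul, smul_eq_mul] at hconv
    refine le_of_mul_le_mul_left ?_ ht0
    nlinarith
  have hlim : Tendsto (fun t : ℝ => f y + t * K) (nhdsWithin 0 (Ioi 0)) (nhds (f y)) :=
    ((continuous_const.add (continuous_id.mul continuous_const)).tendsto' 0 (f y)
      (by simp)).mono_left nhdsWithin_le_nhds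
  exact ge_of_tendsto hlim (eventually_of_mem (Ioc_mem_nhdsGT one_pos) hlin)

namespace Matrix

variable {m n k : Type*} [Fintype m] [Fintype n] [Fintype k]

lemma trace_transpose_mul_self_nonneg (A : Matrix m n ℝ) : 0 ≤ trace (Aᵀ * A) := by
  simpa using (posSemidef_conjTranspose_mul_self A).trace_nonneg

lemma two_mul_trace_transpose_mul_le (A B : Matrix m n ℝ) :
    2 * trace (Aᵀ * B) ≤ trace (Aᵀ * A) + trace (Bᵀ * B) := by
  have h := trace_transpose_mul_self_nonneg (A - B)
  have hBA : trace (Bᵀ * A) = trace (Aᵀ * B) := by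
    rw [← trace_transpose, transpose_mul, transpose_transpose]
  simp only [transpose_sub, Matrix.sub_mul, Matrix.mul_sub, trace_sub, hBA] at h
  linarith

lemma trace_transpose_mul_mul_le_of_idempotent {Q : Matrix m m ℝ}
    (hQt : Qᵀ = Q) (hQQ : Q * Q = Q) (A : Matrix m n ℝ) :
    trace (Aᵀ * Q * A) ≤ trace (Aᵀ * A) := by
  have h := trace_transpose_mul_self_nonneg (A - Q * A)
  have e : (A - Q * A)ᵀ * (A - Q * A) = Aᵀ * A - Aᵀ * Q * A := by
    simp only [transpose_sub, transpose_mul, hQt, Matrix.sub_mul, Matrix.mul_sub, Matrix.mul_assoc,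
      ← Matrix.mul_assoc Q Q A, hQQ]
    abel
  rw [e, trace_sub] at h
  linarith

lemma mul_diagonal_eq_self_of_transpose_mul_self_eq_diagonal [DecidableEq n] {W : Matrix m n ℝ}
    {μ d : n → ℝ} (hW : Wᵀ * W = diagonal μ) (hd : ∀ i, μ i ≠ 0 → d i = 1) :
    W * diagonal d = W := by
  ext a i
  rw [mul_diagonal]
  by_cases hμ : μ i = 0
  · have hcol : ∑ b, W b i * W b i = 0 := by
      simpa [mul_apply, hμ] using congrFun (congrFun hW i) i
    have := (Finset.sum_eq_zero_iff_of_nonneg fun b _ => mul_self_nonneg (W b i)).1 hcol a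
      (Finset.mem_univ a)
    simp [mul_self_eq_zero.1 this]
  · rw [hd i hμ, mul_one]

lemma trace_transpose_mul_self_fromCols {k' : Type*} [Fintype k'] (A : Matrix m k ℝ)
    (B : Matrix m k' ℝ) :
    trace ((fromCols A B)ᵀ * fromCols A B) = trace (Aᵀ * A) + trace (Bᵀ * B) := by
  rw [trace_mul_comm, transpose_fromCols, fromCols_mul_fromRows, trace_add, trace_mul_comm,
    trace_mul_comm B]

lemma trace_transpose_mul_self_smul (c : ℝ) (A : Matrix m n ℝ) :
    trace ((c • A)ᵀ * (c • A)) = c ^ 2 * trace (Aᵀ * A) := by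
  rw [transpose_smul, Matrix.smul_mul, Matrix.mul_smul, smul_smul, trace_smul, smul_eq_mul, sq]

end Matrix

section NuclearNorm

variable {p q : ℕ}

lemma exists_orthogonal_gram_diagonal (Z : Matrix (Fin p) (Fin q) ℝ) :
    ∃ (V : Matrix (Fin q) (Fin q) ℝ) (μ : Fin q → ℝ), V * Vᵀ = 1 ∧ Vᵀ * V = 1 ∧
      (Z * V)ᵀ * (Z * V) = diagonal μ ∧ (∀ i, 0 ≤ μ i) ∧ nuclearNorm Z = ∑ i, √(μ i) := by
  have hH := isHermitian_conjTranspose_mul_self Z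
  have hstar : star (hH.eigenvectorUnitary : Matrix (Fin q) (Fin q) ℝ) = hH.eigenvectorUnitaryᵀ :=
    conjTranspose_eq_transpose_of_trivial _
  refine ⟨hH.eigenvectorUnitary, hH.eigenvalues, ?_, ?_, ?_,
    (posSemidef_conjTranspose_mul_self Z).eigenvalues_nonneg, rfl⟩
  · rw [← hstar]; exact Unitary.coe_mul_star_self _
  · rw [← hstar]; exact Unitary.coe_star_mul_self _
  · have h := hH.conjStarAlgAut_star_eigenvectorUnitary
    rw [Unitary.conjStarAlgAut_star_apply, hstar] at h
    simpa [Matrix.mul_assoc] using h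

lemma exists_trace_eq_nuclearNorm (Z : Matrix (Fin p) (Fin q) ℝ) :
    ∃ (U : Matrix (Fin p) (Fin q) ℝ) (V : Matrix (Fin q) (Fin q) ℝ), V * Vᵀ = 1 ∧
      U * Uᵀ * (U * Uᵀ) = U * Uᵀ ∧ trace (Uᵀ * Z * V) = nuclearNorm Z := by
  obtain ⟨V, μ, hV, -, hgram, hμ, hnuc⟩ := exists_orthogonal_gram_diagonal Z
  -- `(√0)⁻¹ = 0`: the columns of `Z * V * D` are orthonormal where `μ i ≠ 0` and zero elsewhere.
  set D := diagonal fun i => (√(μ i))⁻¹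
  set E := diagonal fun i => (√(μ i))⁻¹ * (μ i * (√(μ i))⁻¹)
  have hUgram : (Z * V * D)ᵀ * (Z * V * D) = E := by
    rw [transpose_mul, Matrix.mul_assoc, ← Matrix.mul_assoc _ (Z * V), hgram, diagonal_transpose,
      diagonal_mul_diagonal, diagonal_mul_diagonal]
  have hUproj : Z * V * D * E = Z * V * D := by
    refine mul_diagonal_eq_self_of_transpose_mul_self_eq_diagonal hUgram fun i hi => ?_
    have hμi : μ i ≠ 0 := by rintro h; simp [h] at hi
    have : √(μ i) ≠ 0 := Real.sqrt_ne_zero'.2 ((hμ i).lt_of_ne' hμi)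
    field_simp
    exact (Real.sq_sqrt (hμ i)).symm
  refine ⟨Z * V * D, V, hV, ?_, ?_⟩
  · rw [Matrix.mul_assoc, ← Matrix.mul_assoc (Z * V * D)ᵀ, hUgram, ← Matrix.mul_assoc, hUproj]
  · rw [transpose_mul, diagonal_transpose, Matrix.mul_assoc, Matrix.mul_assoc, hgram,
      diagonal_mul_diagonal, trace_diagonal, hnuc]
    refine Finset.sum_congr rfl fun i _ => ?_
    rw [inv_mul_eq_div, Real.div_sqrt]

lemma exists_balanced_factorization (Z : Matrix (Fin p) (Fin q) ℝ) :
    ∃ (A : Matrix (Fin p) (Fin q) ℝ) (B : Matrix (Fin q) (Fin q) ℝ), Z = A * Bᵀ ∧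
      trace (Aᵀ * A) = nuclearNorm Z ∧ trace (Bᵀ * B) = nuclearNorm Z := by
  obtain ⟨V, μ, hV, hV', hgram, hμ, hnuc⟩ := exists_orthogonal_gram_diagonal Z
  set τ : Fin q → ℝ := fun i => √(√(μ i))
  have hτ : ∀ i, τ i * τ i = √(μ i) := fun i => Real.mul_self_sqrt (Real.sqrt_nonneg _)
  refine ⟨Z * V * diagonal fun i => (τ i)⁻¹, V * diagonal τ, ?_, ?_, ?_⟩
  · have hcancel : Z * V * diagonal (fun i => (τ i)⁻¹ * τ i) = Z * V := by
      refine mul_diagonal_eq_self_of_transpose_mul_self_eq_diagonal hgram fun i hi => ?_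
      exact inv_mul_cancel₀ (Real.sqrt_ne_zero'.2 (Real.sqrt_pos.2 ((hμ i).lt_of_ne' hi)))
    rw [transpose_mul, diagonal_transpose, Matrix.mul_assoc, ← Matrix.mul_assoc (diagonal _),
      diagonal_mul_diagonal, ← Matrix.mul_assoc, hcancel, Matrix.mul_assoc, hV, Matrix.mul_one]
  · rw [transpose_mul, diagonal_transpose, Matrix.mul_assoc, ← Matrix.mul_assoc _ (Z * V), hgram,
      diagonal_mul_diagonal, diagonal_mul_diagonal, trace_diagonal, hnuc]
    refine Finset.sum_congr rfl fun i _ => ?_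
    rcases (hμ i).eq_or_lt with h | h
    · simp [τ, ← h]
    have : τ i ≠ 0 := Real.sqrt_ne_zero'.2 (Real.sqrt_pos.2 h)
    field_simp
    rw [sq, hτ, Real.mul_self_sqrt (hμ i)]
  · rw [transpose_mul, diagonal_transpose, Matrix.mul_assoc, ← Matrix.mul_assoc Vᵀ, hV',
      Matrix.one_mul, diagonal_mul_diagonal, trace_diagonal, hnuc]
    exact Finset.sum_congr rfl fun i _ => hτ i

lemma nuclearNorm_mul_transpose_le_s17 {k : Type*} [Fintype k] (A : Matrix (Fin p) k ℝ)
    (B : Matrix (Fin q) k ℝ) :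
    2 * nuclearNorm (A * Bᵀ) ≤ trace (Aᵀ * A) + trace (Bᵀ * B) := by
  obtain ⟨U, V, hV, hU, htr⟩ := exists_trace_eq_nuclearNorm (A * Bᵀ)
  have hA : trace ((Aᵀ * U)ᵀ * (Aᵀ * U)) ≤ trace (Aᵀ * A) := by
    rw [transpose_mul, transpose_transpose, trace_mul_cycle, Matrix.mul_assoc Aᵀ U]
    exact trace_transpose_mul_mul_le_of_idempotent (by simp) hU A
  have hB : trace ((Bᵀ * V)ᵀ * (Bᵀ * V)) = trace (Bᵀ * B) := by
    rw [transpose_mul, transpose_transpose, trace_mul_cycle, Matrix.mul_assoc Bᵀ, hV,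
      Matrix.mul_one]
  calc 2 * nuclearNorm (A * Bᵀ) = 2 * trace ((Aᵀ * U)ᵀ * (Bᵀ * V)) := by
        rw [← htr, transpose_mul, transpose_transpose]; simp only [Matrix.mul_assoc]
    _ ≤ trace ((Aᵀ * U)ᵀ * (Aᵀ * U)) + trace ((Bᵀ * V)ᵀ * (Bᵀ * V)) :=
        two_mul_trace_transpose_mul_le _ _
    _ ≤ trace (Aᵀ * A) + trace (Bᵀ * B) := by rw [hB]; exact add_le_add_left hA _

lemma nuclearNorm_add_le (Z₁ Z₂ : Matrix (Fin p) (Fin q) ℝ) :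
    nuclearNorm (Z₁ + Z₂) ≤ nuclearNorm Z₁ + nuclearNorm Z₂ := by
  obtain ⟨A₁, B₁, rfl, hA₁, hB₁⟩ := exists_balanced_factorization Z₁
  obtain ⟨A₂, B₂, rfl, hA₂, hB₂⟩ := exists_balanced_factorization Z₂
  have h := nuclearNorm_mul_transpose_le_s17 (fromCols A₁ A₂) (fromCols B₁ B₂)
  rw [transpose_fromCols, fromCols_mul_fromRows, ← transpose_fromCols,
    trace_transpose_mul_self_fromCols, trace_transpose_mul_self_fromCols] at h
  linarith

lemma nuclearNorm_smul_le {c : ℝ} (hc : 0 ≤ c) (Z : Matrix (Fin p) (Fin q) ℝ) :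
    nuclearNorm (c • Z) ≤ c * nuclearNorm Z := by
  obtain ⟨A, B, rfl, hA, hB⟩ := exists_balanced_factorization Z
  have h := nuclearNorm_mul_transpose_le_s17 (√c • A) (√c • B)
  rw [trace_transpose_mul_self_smul, trace_transpose_mul_self_smul, Real.sq_sqrt hc,
    transpose_smul, Matrix.smul_mul, Matrix.mul_smul, smul_smul, Real.mul_self_sqrt hc, hA,
    hB] at h
  linarith

lemma convexOn_nuclearNorm : ConvexOn ℝ Set.univ (nuclearNorm : Matrix (Fin p) (Fin q) ℝ → ℝ) :=
  ⟨convex_univ, fun Z₁ _ Z₂ _ _ _ ha hb _ =>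
    (nuclearNorm_add_le _ _).trans
      (add_le_add (nuclearNorm_smul_le ha Z₁) (nuclearNorm_smul_le hb Z₂))⟩

end NuclearNorm

section Objective

variable {m n : ℕ} (Ω : Finset (Fin m × Fin n))

lemma frobSq_proj_add_projPerp_sub (X Y Z : Matrix (Fin m) (Fin n) ℝ) :
    frobSq (proj Ω X + projPerp Ω Y - Z) =
      frobSq (proj Ω (X - Z)) + frobSq (projPerp Ω (Y - Z)) := by
  simp only [frobSq, ← Finset.sum_add_distrib]
  refine Finset.sum_congr rfl fun i _ => Finset.sum_congr rfl fun j _ => ?_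
  by_cases h : (i, j) ∈ Ω <;> simp [proj, projPerp, h]

lemma frobSq_projPerp_smul (c : ℝ) (D : Matrix (Fin m) (Fin n) ℝ) :
    frobSq (projPerp Ω (c • D)) = c ^ 2 * frobSq (projPerp Ω D) := by
  simp only [frobSq, Finset.mul_sum]
  refine Finset.sum_congr rfl fun i _ => Finset.sum_congr rfl fun j _ => ?_
  by_cases h : (i, j) ∈ Ω <;> simp [projPerp, h, mul_pow]

lemma convexOn_frobSq : ConvexOn ℝ Set.univ (frobSq : Matrix (Fin m) (Fin n) ℝ → ℝ) := by
  refine ⟨convex_univ, fun A _ B _ a b ha hb hab => ?_⟩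
  simp only [frobSq, smul_eq_mul, Finset.mul_sum, ← Finset.sum_add_distrib]
  refine Finset.sum_le_sum fun i _ => Finset.sum_le_sum fun j _ => ?_
  simpa using (even_two.convexOn_pow (𝕜 := ℝ)).2 (x := A i j) (y := B i j) trivial trivial ha hb
    hab

lemma convexOn_frobSq_proj_sub (X : Matrix (Fin m) (Fin n) ℝ) :
    ConvexOn ℝ Set.univ fun Z => frobSq (proj Ω (X - Z)) := by
  refine ⟨convex_univ, fun Z _ W _ a b ha hb hab => ?_⟩
  have hlin : proj Ω (X - (a • Z + b • W)) = a • proj Ω (X - Z) + b • proj Ω (X - W) := by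
    ext i j
    by_cases h : (i, j) ∈ Ω
    · simp only [proj, Matrix.sub_apply, Matrix.add_apply, Matrix.smul_apply, smul_eq_mul,
        of_apply, h, ↓reduceIte, smul_of, Pi.smul_apply]
      linear_combination (X i j) * hab.symm
    · simp [proj, h]
  dsimp only
  rw [hlin]
  exact convexOn_frobSq.2 trivial trivial ha hb hab

lemma convexOn_Hobj (X : Matrix (Fin m) (Fin n) ℝ) {lam : ℝ} (hlam : 0 ≤ lam) :
    ConvexOn ℝ Set.univ (Hobj Ω X lam) :=
  ((convexOn_frobSq_proj_sub Ω X).smul (by norm_num : (0 : ℝ) ≤ 1 / 2)).add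
    (convexOn_nuclearNorm.smul hlam)

end Objective

theorem softImputeALS_limit_solves_convex_general {m n r : ℕ} (Ω : Finset (Fin m × Fin n))
    (X : Matrix (Fin m) (Fin n) ℝ) (lam : ℝ) (hlam : 0 < lam)
    (Astar : Matrix (Fin m) (Fin r) ℝ) (Bstar : Matrix (Fin n) (Fin r) ℝ)
    -- Z* = A*B*ᵀ solves the fully observed nuclear-norm problem
    (hfull : ∀ Z : Matrix (Fin m) (Fin n) ℝ,
      (1 / 2) * frobSq ((proj Ω X + projPerp Ω (Astar * Bstarᵀ)) - Astar * Bstarᵀ) +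
          lam * nuclearNorm (Astar * Bstarᵀ) ≤
        (1 / 2) * frobSq ((proj Ω X + projPerp Ω (Astar * Bstarᵀ)) - Z) +
          lam * nuclearNorm Z) :
    ∀ M : Matrix (Fin m) (Fin n) ℝ, Hobj Ω X lam (Astar * Bstarᵀ) ≤ Hobj Ω X lam M := by
  intro M
  set Zs := Astar * Bstarᵀ
  have hgap : ∀ Z, Hobj Ω X lam Zs ≤ Hobj Ω X lam Z + 1 / 2 * frobSq (projPerp Ω (Zs - Z)) := by
    intro Z
    have h := hfull Z
    have h0 : frobSq (projPerp Ω (0 : Matrix (Fin m) (Fin n) ℝ)) = 0 := by simp [frobSq, projPerp]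
    rw [frobSq_proj_add_projPerp_sub, frobSq_proj_add_projPerp_sub, sub_self, h0] at h
    unfold Hobj
    linarith
  refine (convexOn_Hobj Ω X hlam.le).le_of_forall_le_add_sq trivial trivial
    (K := 1 / 2 * frobSq (projPerp Ω (Zs - M))) fun t _ => ?_
  have hdiff : Zs - ((1 - t) • Zs + t • M) = t • (Zs - M) := by module
  have h := hgap ((1 - t) • Zs + t • M)
  rw [hdiff, frobSq_projPerp_smul] at h
  linarith

theorem softImputeALS_limit_solves_convex {m n r : ℕ} (Ω : Finset (Fin m × Fin n))
    (X : Matrix (Fin m) (Fin n) ℝ) (lam : ℝ) (hlam : 0 < lam)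
    (A : ℕ → Matrix (Fin m) (Fin r) ℝ) (B : ℕ → Matrix (Fin n) (Fin r) ℝ)
    (hALS : SoftImputeALS Ω X lam A B)
    (Astar : Matrix (Fin m) (Fin r) ℝ) (Bstar : Matrix (Fin n) (Fin r) ℝ)
    (φ : ℕ → ℕ) (hφ : StrictMono φ)
    (hlim : Tendsto (fun k => (A (φ k), B (φ k))) atTop (nhds (Astar, Bstar)))
    -- the convex problem has a minimizer of rank at most r
    (hminrank : ∃ M : Matrix (Fin m) (Fin n) ℝ, M.rank ≤ r ∧
      ∀ M' : Matrix (Fin m) (Fin n) ℝ, Hobj Ω X lam M ≤ Hobj Ω X lam M')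
    -- Z* = A*B*ᵀ solves the fully observed nuclear-norm problem
    (hfull : ∀ Z : Matrix (Fin m) (Fin n) ℝ,
      (1 / 2) * frobSq ((proj Ω X + projPerp Ω (Astar * Bstarᵀ)) - Astar * Bstarᵀ) +
          lam * nuclearNorm (Astar * Bstarᵀ) ≤
        (1 / 2) * frobSq ((proj Ω X + projPerp Ω (Astar * Bstarᵀ)) - Z) +
          lam * nuclearNorm Z) :
    ∀ M : Matrix (Fin m) (Fin n) ℝ, Hobj Ω X lam (Astar * Bstarᵀ) ≤ Hobj Ω X lam M :=
  softImputeALS_limit_solves_convex_general Ω X lam hlam Astar Bstar hfull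
end
end
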